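/- arXiv:0802.0661 — 3 statements merged into one kernel-verified Lean document; each statement's English description precedes it below -/
import Mathlib

section
/- Let M be a nonempty compact topological space and (X, d) a metric space. Let f, g : M → X be continuous maps whose images differ, i.e. f '' (univ) ≠ g '' (univ). Then there exists ε > 0 such that for every homeomorphism ψ : M ≃ₜ M there is a point x ∈ M with d(f(ψ(x)), g(x)) ≥ ε. In particular, the infimum over all homeomorphisms ψ of sup_{x ∈ M} d(f(ψ(x)), g(x)) is strictly positive. -/
/-! If the compact images `range f` and `range g` differ, some point `p` of one of them lies
outside the other, hence at some distance `ε > 0` from it. A reparametrization `σ` of the domain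
only needs to be surjective for `f ∘ σ` to have the same image as `f`, so either `f (σ x) = p` for
some `x` (if `p ∈ range f`) or `g x = p` for some `x` (if `p ∈ range g`), and in both cases
`ε ≤ dist (f (σ x)) (g x)`. -/

open Set Function

theorem IsClosed.exists_pos_forall_le_dist {X : Type*} [PseudoMetricSpace X] {s : Set X}
    (hs : IsClosed s) {p : X} (hp : p ∉ s) : ∃ ε > 0, ∀ y ∈ s, ε ≤ dist p y := by
  obtain ⟨ε, hε, hball⟩ := Metric.isOpen_iff.mp hs.isOpen_compl p hp
  exact ⟨ε, hε, fun y hy => not_lt.mp fun hlt => hball (Metric.mem_ball'.mpr hlt) hy⟩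

theorem exists_pos_forall_surjective_exists_le_dist_comp {M X : Type*} [TopologicalSpace M]
    [CompactSpace M] [MetricSpace X] {f g : M → X} (hf : Continuous f) (hg : Continuous g)
    (hne : range f ≠ range g) :
    ∃ ε > 0, ∀ σ : M → M, Surjective σ → ∃ x, ε ≤ dist (f (σ x)) (g x) := by
  by_cases hfg : range f ⊆ range g
  · have hgf : ¬range g ⊆ range f := fun hgf => hne (hfg.antisymm hgf)
    obtain ⟨_, ⟨m, rfl⟩, hm⟩ := not_subset.mp hgf
    obtain ⟨ε, hε, hdist⟩ := (isCompact_range hf).isClosed.exists_pos_forall_le_dist hm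
    exact ⟨ε, hε, fun σ _ => ⟨m, dist_comm (g m) (f (σ m)) ▸ hdist _ (mem_range_self _)⟩⟩
  · obtain ⟨_, ⟨m, rfl⟩, hm⟩ := not_subset.mp hfg
    obtain ⟨ε, hε, hdist⟩ := (isCompact_range hg).isClosed.exists_pos_forall_le_dist hm
    refine ⟨ε, hε, fun σ hσ => ?_⟩
    obtain ⟨x, rfl⟩ := hσ m
    exact ⟨x, hdist _ (mem_range_self x)⟩

theorem le_ciInf_ciSup_of_forall_exists_le {ι κ : Type*} [Nonempty ι] {F : ι → κ → ℝ} {ε : ℝ}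
    (hbdd : ∀ i, BddAbove (range (F i))) (h : ∀ i, ∃ x, ε ≤ F i x) :
    ε ≤ ⨅ i, ⨆ x, F i x :=
  le_ciInf fun i => (h i).elim fun x hx => hx.trans (le_ciSup (hbdd i) x)

theorem stmt_0_general {M X : Type*} [TopologicalSpace M] [CompactSpace M]
    [MetricSpace X] (f g : M → X) (hf : Continuous f) (hg : Continuous g)
    (hne : f '' Set.univ ≠ g '' Set.univ) :
    (∃ ε > (0 : ℝ), ∀ ψ : M ≃ₜ M, ∃ x : M, ε ≤ dist (f (ψ x)) (g x)) ∧
      0 < ⨅ ψ : M ≃ₜ M, ⨆ x : M, dist (f (ψ x)) (g x) := by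
  rw [image_univ, image_univ] at hne
  obtain ⟨ε, hε, hsep⟩ := exists_pos_forall_surjective_exists_le_dist_comp hf hg hne
  have hsepψ : ∀ ψ : M ≃ₜ M, ∃ x, ε ≤ dist (f (ψ x)) (g x) := fun ψ => hsep ψ ψ.surjective
  have hbdd : ∀ ψ : M ≃ₜ M, BddAbove (range fun x => dist (f (ψ x)) (g x)) := fun ψ =>
    (isCompact_range ((hf.comp ψ.continuous).dist hg)).bddAbove
  have : Nonempty (M ≃ₜ M) := ⟨Homeomorph.refl M⟩
  exact ⟨⟨ε, hε, hsepψ⟩, hε.trans_le (le_ciInf_ciSup_of_forall_exists_le hbdd hsepψ)⟩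

/-- Two continuous maps from a nonempty compact space into a metric space with
distinct images stay at a positive uniform distance from each other under
arbitrary reparametrizations of the domain by homeomorphisms; in particular the
infimum over homeomorphisms of the sup-distance is strictly positive. -/
theorem stmt_0 {M X : Type*} [TopologicalSpace M] [CompactSpace M] [Nonempty M]
    [MetricSpace X] (f g : M → X) (hf : Continuous f) (hg : Continuous g)
    (hne : f '' Set.univ ≠ g '' Set.univ) :
    (∃ ε > (0 : ℝ), ∀ ψ : M ≃ₜ M, ∃ x : M, ε ≤ dist (f (ψ x)) (g x)) ∧
      0 < ⨅ ψ : M ≃ₜ M, ⨆ x : M, dist (f (ψ x)) (g x) :=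
  stmt_0_general f g hf hg hne
end

section
/- Let E, F, G be real normed vector spaces, let k ≥ 1 be a natural number, and let ψ : G → E and f : E → F be k times continuously differentiable maps (ContDiff ℝ k). Let y ∈ G and set x = ψ(y). Assume that the iterated Fréchet derivatives of f vanish at x in all orders 1 ≤ l ≤ k − 1, i.e. iteratedFDeriv ℝ l f x = 0 for 1 ≤ l < k. Then the k-th iterated Fréchet derivative of the composition satisfies iteratedFDeriv ℝ k (f ∘ ψ) y = (iteratedFDeriv ℝ k f x).compContinuousLinearMap (fun _ ↦ fderiv ℝ ψ y); that is, for all v₁, …, v_k ∈ G it sends (v₁, …, v_k) to (iteratedFDeriv ℝ k f x)(Dψ(y)v₁, …, Dψ(y)v_k). -/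
/-!
By Faà di Bruno's formula, `D^k (f ∘ ψ) y` is a sum over the ordered partitions `c` of
`Fin k` of `D^{|c|} f x` applied to derivatives of `ψ` whose orders are the block sizes of `c`.
A partition other than the one into singletons has between `1` and `k - 1` blocks, so its term
vanishes; the partition into singletons contributes `D^k f x (Dψ y ·, …, Dψ y ·)`.
-/

namespace OrderedFinpartition

lemma eq_atomic_of_length_eq {n : ℕ} (c : OrderedFinpartition n) (h : c.length = n) :
    c = atomic n := by
  have hsize : ∀ m, c.partSize m = 1 := by
    have hsum : ∑ _m : Fin c.length, 1 = ∑ m, c.partSize m := by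
      simpa [h] using (c.sum_sigma_eq_sum fun _ ↦ (1 : ℕ)).symm
    exact fun m ↦ ((Finset.sum_eq_sum_iff_of_le fun m _ ↦ c.partSize_pos m).1 hsum m
      (Finset.mem_univ m)).symm
  obtain ⟨length, partSize, _, emb, _, parts_strictMono, _, _⟩ := c
  dsimp only at h hsize
  subst h
  obtain rfl : partSize = fun _ ↦ 1 := funext hsize
  have hemb : ∀ m j, emb m j = m := fun m j ↦ by
    rw [Subsingleton.elim j 0]
    exact parts_strictMono.apply_eq
  rw [OrderedFinpartition.ext_iff]
  exact ⟨rfl, HEq.rfl, heq_of_eq (funext₂ hemb)⟩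

end OrderedFinpartition

namespace FormalMultilinearSeries

variable {𝕜 E F G : Type*} [NontriviallyNormedField 𝕜]
  [NormedAddCommGroup E] [NormedSpace 𝕜 E] [NormedAddCommGroup F] [NormedSpace 𝕜 F]
  [NormedAddCommGroup G] [NormedSpace 𝕜 G]
  (q : FormalMultilinearSeries 𝕜 F G) (p : FormalMultilinearSeries 𝕜 E F)

lemma compAlongOrderedFinpartition_atomic (n : ℕ) :
    q.compAlongOrderedFinpartition p (.atomic n) =
      (q n).compContinuousLinearMap fun _ ↦ continuousMultilinearCurryFin1 𝕜 E F (p 1) := by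
  ext v
  simp only [compAlongOrderedFinpartition_apply,
    OrderedFinpartition.applyOrderedFinpartition_apply,
    ContinuousMultilinearMap.compContinuousLinearMap_apply, continuousMultilinearCurryFin1_apply]
  refine congrArg (q n) (funext fun m ↦ congrArg (p 1) (funext fun j ↦ ?_))
  fin_cases j
  rfl

lemma taylorComp_eq_of_forall_lt_eq_zero {n : ℕ} (hq : ∀ l, 0 < l → l < n → q l = 0) :
    q.taylorComp p n =
      (q n).compContinuousLinearMap fun _ ↦ continuousMultilinearCurryFin1 𝕜 E F (p 1) := by
  rw [← compAlongOrderedFinpartition_atomic, FormalMultilinearSeries.taylorComp,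
    Finset.sum_eq_single_of_mem _ (Finset.mem_univ _)]
  intro c _ hc
  have hlt : c.length < n := c.length_le.lt_of_ne (mt c.eq_atomic_of_length_eq hc)
  ext v
  simp [hq c.length (c.length_pos (Nat.zero_lt_of_lt hlt)) hlt]

end FormalMultilinearSeries

theorem continuousMultilinearCurryFin1_iteratedFDeriv_one {𝕜 E F : Type*}
    [NontriviallyNormedField 𝕜] [NormedAddCommGroup E] [NormedSpace 𝕜 E]
    [NormedAddCommGroup F] [NormedSpace 𝕜 F] (f : E → F) (x : E) :
    continuousMultilinearCurryFin1 𝕜 E F (iteratedFDeriv 𝕜 1 f x) = fderiv 𝕜 f x := by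
  ext v
  simp

theorem stmt_1_general {E F G : Type*} [NormedAddCommGroup E] [NormedSpace ℝ E]
    [NormedAddCommGroup F] [NormedSpace ℝ F]
    [NormedAddCommGroup G] [NormedSpace ℝ G]
    (k : ℕ) (ψ : G → E) (f : E → F)
    (hψ : ContDiff ℝ k ψ) (hf : ContDiff ℝ k f)
    (y : G) (x : E) (hx : x = ψ y)
    (hvanish : ∀ l : ℕ, 1 ≤ l → l < k → iteratedFDeriv ℝ l f x = 0) :
    iteratedFDeriv ℝ k (f ∘ ψ) y =
      (iteratedFDeriv ℝ k f x).compContinuousLinearMap (fun _ : Fin k => fderiv ℝ ψ y) := by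
  subst hx
  rw [iteratedFDeriv_comp hf.contDiffAt hψ.contDiffAt le_rfl,
    FormalMultilinearSeries.taylorComp_eq_of_forall_lt_eq_zero (ftaylorSeries ℝ f (ψ y)) _
      hvanish]
  simp only [ftaylorSeries, continuousMultilinearCurryFin1_iteratedFDeriv_one]

/-- Chain rule for the first nonvanishing iterated derivative: if all iterated
Fréchet derivatives of `f` of orders `1 ≤ l < k` vanish at `x = ψ y`, then the
`k`-th iterated derivative of the composition `f ∘ ψ` at `y` is obtained from
`iteratedFDeriv ℝ k f x` by precomposing each argument with `fderiv ℝ ψ y`. -/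
theorem stmt_1 {E F G : Type*} [NormedAddCommGroup E] [NormedSpace ℝ E]
    [NormedAddCommGroup F] [NormedSpace ℝ F]
    [NormedAddCommGroup G] [NormedSpace ℝ G]
    (k : ℕ) (hk : 1 ≤ k) (ψ : G → E) (f : E → F)
    (hψ : ContDiff ℝ k ψ) (hf : ContDiff ℝ k f)
    (y : G) (x : E) (hx : x = ψ y)
    (hvanish : ∀ l : ℕ, 1 ≤ l → l < k → iteratedFDeriv ℝ l f x = 0) :
    iteratedFDeriv ℝ k (f ∘ ψ) y =
      (iteratedFDeriv ℝ k f x).compContinuousLinearMap (fun _ : Fin k => fderiv ℝ ψ y) :=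
  stmt_1_general k ψ f hψ hf y x hx hvanish
end

section
/- Let E, F be real normed vector spaces, k ≥ 1 a natural number, and let ψ : E → E and f : E → F be k times continuously differentiable maps (ContDiff ℝ k). Let y ∈ E and x = ψ(y). Assume: (a) iteratedFDeriv ℝ l f x = 0 for every l with 1 ≤ l < k; (b) iteratedFDeriv ℝ k f x ≠ 0; and (c) the derivative fderiv ℝ ψ y : E →L[ℝ] E is surjective (for instance, ψ is a diffeomorphism, so that fderiv ℝ ψ y is a continuous linear equivalence). Then iteratedFDeriv ℝ k (f ∘ ψ) y ≠ 0. -/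
open Set Function

private lemma orderedFinpartition_eq_atomic_of_length_eq {n : ℕ}
    (c : OrderedFinpartition n) (h : c.length = n) :
    c = OrderedFinpartition.atomic n := by
  have hsum : ∑ i, c.partSize i = n := by
    have := Fintype.card_congr c.equivSigma
    simpa [Fintype.card_sigma] using this
  have hone : ∀ i, c.partSize i = 1 := by
    by_contra hcon
    push_neg at hcon
    obtain ⟨i, hi⟩ := hcon
    have h2 : 2 ≤ c.partSize i := by have := c.partSize_pos i; omega
    have hcard : (Finset.univ.erase i).card = n - 1 := by
      simp [Finset.card_erase_of_mem, h]
    have h3 : (Finset.univ.erase i).card • 1 ≤ ∑ j ∈ Finset.univ.erase i, c.partSize j :=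
      Finset.card_nsmul_le_sum _ _ _ (fun j _ ↦ c.partSize_pos j)
    have h4 : ∑ j ∈ Finset.univ.erase i, c.partSize j + c.partSize i = n := by
      rw [Finset.sum_erase_add _ _ (Finset.mem_univ i)]; exact hsum
    have hn : 1 ≤ n := by have := i.2; omega
    simp only [smul_eq_mul, mul_one] at h3
    omega
  obtain ⟨len, ps, pos, emb, embmono, partsmono, dis, cov⟩ := c
  simp only at h hone partsmono
  subst h
  have hps : ps = fun _ ↦ 1 := funext hone
  subst hps
  have hemb : emb = fun m (_ : Fin 1) ↦ m := by
    have hinj : Injective fun m ↦ emb m ⟨1 - 1, Nat.sub_one_lt_of_lt (pos m)⟩ :=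
      partsmono.injective
    have hsurj : Surjective fun m ↦ emb m ⟨1 - 1, Nat.sub_one_lt_of_lt (pos m)⟩ :=
      Finite.surjective_of_injective hinj
    have W : WellFoundedLT (Fin len) := inferInstance
    have hid : (fun m ↦ emb m ⟨1 - 1, Nat.sub_one_lt_of_lt (pos m)⟩) = id :=
      (@StrictMono.range_inj (Fin len) (Fin len) _ _ W _ id partsmono
        strictMono_id).1 (by rw [Set.range_id]; exact Set.range_eq_univ.2 hsurj)
    funext m j
    have hj : j = ⟨1 - 1, Nat.sub_one_lt_of_lt (pos m)⟩ := Subsingleton.elim _ _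
    rw [hj]
    exact congrFun hid m
  subst hemb
  rfl

/-- The first nonvanishing order of the iterated Fréchet derivative is invariant
under precomposition with a map whose derivative is surjective: if
`∇^l f(x) = 0` for `1 ≤ l < k` and `∇^k f(x) ≠ 0`, then `∇^k (f ∘ ψ)(y) ≠ 0`
where `x = ψ y` and `fderiv ℝ ψ y` is surjective. -/
theorem stmt_3 {E F : Type*} [NormedAddCommGroup E] [NormedSpace ℝ E]
    [NormedAddCommGroup F] [NormedSpace ℝ F]
    (k : ℕ) (hk : 1 ≤ k) (ψ : E → E) (f : E → F)
    (hψ : ContDiff ℝ k ψ) (hf : ContDiff ℝ k f)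
    (y : E) (x : E) (hx : x = ψ y)
    (hvanish : ∀ l : ℕ, 1 ≤ l → l < k → iteratedFDeriv ℝ l f x = 0)
    (htop : iteratedFDeriv ℝ k f x ≠ 0)
    (hsurj : Function.Surjective (fderiv ℝ ψ y)) :
    iteratedFDeriv ℝ k (f ∘ ψ) y ≠ 0 := by
  -- Faà di Bruno: the iterated derivative of the composition is the Taylor composition.
  have hcomp : iteratedFDeriv ℝ k (f ∘ ψ) y =
      ((ftaylorSeries ℝ f (ψ y)).taylorComp (ftaylorSeries ℝ ψ y)) k := by
    have Hf : HasFTaylorSeriesUpTo (k : ℕ∞) f (ftaylorSeries ℝ f) :=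
      contDiff_iff_ftaylorSeries.mp hf
    have Hψ : HasFTaylorSeriesUpTo (k : ℕ∞) ψ (ftaylorSeries ℝ ψ) :=
      contDiff_iff_ftaylorSeries.mp hψ
    rw [← hasFTaylorSeriesUpToOn_univ_iff] at Hf Hψ
    have Hc := Hf.comp Hψ (mapsTo_univ _ _)
    rw [hasFTaylorSeriesUpToOn_univ_iff] at Hc
    exact (Hc.eq_iteratedFDeriv (le_refl _) y).symm
  set q := ftaylorSeries ℝ f (ψ y) with hq
  set p := ftaylorSeries ℝ ψ y with hp
  -- only the atomic partition contributes
  have hsingle : (q.taylorComp p) k =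
      q.compAlongOrderedFinpartition p (OrderedFinpartition.atomic k) := by
    rw [FormalMultilinearSeries.taylorComp]
    apply Fintype.sum_eq_single
    intro c hc
    have hlen : c.length < k := by
      rcases lt_or_eq_of_le c.length_le with h | h
      · exact h
      · exact absurd (orderedFinpartition_eq_atomic_of_length_eq c h) hc
    have hpos : 1 ≤ c.length := c.length_pos (by omega)
    have hz : q c.length = 0 := by
      rw [hq]
      show iteratedFDeriv ℝ c.length f (ψ y) = 0
      rw [← hx]
      exact hvanish c.length hpos hlen
    ext v
    rw [FormalMultilinearSeries.compAlongOrderedFinpartition_apply, hz]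
    simp
  -- pick a vector where the top derivative is nonzero
  have hW : ∃ w : Fin k → E, iteratedFDeriv ℝ k f x w ≠ 0 := by
    by_contra hcon
    push_neg at hcon
    exact htop (ContinuousMultilinearMap.ext fun w ↦ hcon w)
  obtain ⟨w, hw⟩ := hW
  choose v hv using fun i ↦ hsurj (w i)
  intro hzero
  apply hw
  have : iteratedFDeriv ℝ k (f ∘ ψ) y v = 0 := by rw [hzero]; rfl
  rw [hcomp, hsingle] at this
  have hval : q.compAlongOrderedFinpartition p (OrderedFinpartition.atomic k) v =
      iteratedFDeriv ℝ k f x w := by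
    rw [FormalMultilinearSeries.compAlongOrderedFinpartition_apply]
    show q k (fun m ↦ p 1 (fun _ ↦ v m)) = iteratedFDeriv ℝ k f x w
    rw [hq, hp, hx]
    show iteratedFDeriv ℝ k f (ψ y) (fun m ↦ iteratedFDeriv ℝ 1 ψ y (fun _ ↦ v m)) = _
    congr 1
    funext m
    rw [iteratedFDeriv_one_apply]
    exact hv m
  rw [hval] at this
  exact this
end
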